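/- (Equality in the refined KMT inequality for pseudo-adequate diagrams, abstract form.) Let f be a loop-count function on states of n crossings that is pseudo-adequate, i.e. f(Function.update s_A i true) ≤ f(s_A) and f(Function.update s_B i false) ≤ f(s_B) for every index i. Then the bracket ⟨f⟩ := Σ_s w(s) is nonzero and span ⟨f⟩ = 2n + 2(f(s_A) + f(s_B)) − 4. -/

import Mathlib

open LaurentPolynomial

/-- Maximal degree (max of the support), with convention `odeg 0 = 0`. -/
noncomputable def odeg (g : LaurentPolynomial ℤ) : ℤ := g.coeff.support.max.unbotD 0

/-- Minimal degree (min of the support), with convention `udeg 0 = 0`. -/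
noncomputable def udeg (g : LaurentPolynomial ℤ) : ℤ := g.coeff.support.min.untopD 0

/-- The span of a Laurent polynomial. -/
noncomputable def lspan (g : LaurentPolynomial ℤ) : ℤ := odeg g - udeg g

/-- Number of crossings spliced by an A-splice in the state `s`. -/
def alpha {n : ℕ} (s : Fin n → Bool) : ℕ :=
  (Finset.univ.filter (fun i => s i = false)).card

/-- Number of crossings spliced by a B-splice in the state `s`. -/
def beta {n : ℕ} (s : Fin n → Bool) : ℕ :=
  (Finset.univ.filter (fun i => s i = true)).card

/-- A loop-count function: at least one loop in every state, and changing the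
splice at one crossing changes the number of loops by at most one. -/
def IsLoopCount {n : ℕ} (f : (Fin n → Bool) → ℕ) : Prop :=
  (∀ s, 1 ≤ f s) ∧
    ∀ (s : Fin n → Bool) (i : Fin n),
      |(f (Function.update s i (!(s i))) : ℤ) - (f s : ℤ)| ≤ 1

/-- The weight `A^(α(s)-β(s)) * (-A^2 - A^(-2))^(f(s)-1)` of a state `s`. -/
noncomputable def weight {n : ℕ} (f : (Fin n → Bool) → ℕ) (s : Fin n → Bool) :
    LaurentPolynomial ℤ :=
  T ((alpha s : ℤ) - (beta s : ℤ)) * (-T 2 - T (-2)) ^ (f s - 1)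

/-- The Kauffman bracket of a loop-count function: the sum of the weights. -/
noncomputable def bracket {n : ℕ} (f : (Fin n → Bool) → ℕ) : LaurentPolynomial ℤ :=
  ∑ s : Fin n → Bool, weight f s

/-!
The weight of a state `s` is `A^(α(s) - β(s))` times `δ^(f(s) - 1)` with `δ = -A² - A⁻²`, so its
support lies in `[α - β - 2(f - 1), α - β + 2(f - 1)]`, with coefficient `±1` at both ends.
Flipping one crossing changes `f` by at most one, so `f` is 1-Lipschitz for the Hamming distance
on states; together with pseudo-adequacy at `s_A` this gives `f(s) + 1 ≤ f(s_A) + β(s)` for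
`s ≠ s_A`, which puts the top degree of every other state strictly below that of `s_A`. Hence the
top coefficient of the bracket is that of `s_A` alone, and dually the bottom one is that of `s_B`.
-/

namespace LaurentPolynomial

variable {R : Type*} [Semiring R]

lemma coeff_T_mul (m : ℤ) (g : R[T;T⁻¹]) (d : ℤ) : (T m * g).coeff d = g.coeff (d - m) := by
  rw [T, AddMonoidAlgebra.coeff_single_mul_apply, one_mul, neg_add_eq_sub]

lemma coeff_mul_T (g : R[T;T⁻¹]) (m d : ℤ) : (g * T m).coeff d = g.coeff (d - m) := by
  rw [← T_mul, coeff_T_mul]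

end LaurentPolynomial

section LoopValue

variable (R : Type*) [CommRing R]

noncomputable def loopValue : R[T;T⁻¹] := -T 2 - T (-2)

variable {R}

lemma coeff_mul_loopValue (g : R[T;T⁻¹]) (d : ℤ) :
    (g * loopValue R).coeff d = -g.coeff (d - 2) - g.coeff (d + 2) := by
  simp [loopValue, mul_sub, coeff_mul_T, sub_neg_eq_add]

lemma invert_loopValue : invert (loopValue R) = loopValue R := by
  rw [loopValue, map_sub, map_neg, invert_T, invert_T, neg_neg]
  abel

lemma coeff_loopValue_pow_neg (k : ℕ) (d : ℤ) :
    (loopValue R ^ k).coeff (-d) = (loopValue R ^ k).coeff d := by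
  rw [← invert_apply, map_pow, invert_loopValue]

lemma coeff_loopValue_pow_eq_zero_of_lt {k : ℕ} {d : ℤ} (h : 2 * k < |d|) :
    (loopValue R ^ k).coeff d = 0 := by
  wlog hd : 0 ≤ d generalizing d
  · rw [← neg_neg d, coeff_loopValue_pow_neg]
    exact this (by rwa [abs_neg]) (by omega)
  rw [abs_of_nonneg hd] at h
  induction k generalizing d with
  | zero => simp [← T_zero, T_apply]; omega
  | succ k ih =>
    rw [pow_succ, coeff_mul_loopValue, ih (by omega) (by omega), ih (by omega) (by omega)]
    simp

lemma coeff_loopValue_pow_two_mul (k : ℕ) :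
    (loopValue R ^ k).coeff (2 * k) = (-1) ^ k := by
  induction k with
  | zero => simp [← T_zero, T_apply]
  | succ k ih =>
    have h_above : (loopValue R ^ k).coeff (2 * (k + 1 : ℕ) + 2) = 0 :=
      coeff_loopValue_pow_eq_zero_of_lt (by rw [abs_of_nonneg (by omega)]; omega)
    rw [pow_succ, coeff_mul_loopValue, h_above,
      show 2 * ((k + 1 : ℕ) : ℤ) - 2 = 2 * k by push_cast; ring, ih]
    ring

end LoopValue

open Function

lemma hammingDist_update_add_one {ι : Type*} [Fintype ι] [DecidableEq ι] {β : ι → Type*}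
    [∀ i, DecidableEq (β i)] {x y : ∀ i, β i} {i : ι} (h : x i ≠ y i) :
    hammingDist (update x i (y i)) y + 1 = hammingDist x y := by
  have hfilter : ({j | update x i (y i) j ≠ y j} : Finset ι) =
      ({j | x j ≠ y j} : Finset ι).erase i := by
    ext j
    by_cases hj : j = i
    · simp [hj]
    · simp [hj, update_of_ne]
  rw [hammingDist, hammingDist, hfilter, Finset.card_erase_add_one (by simpa using h)]

section States

variable {n : ℕ}

lemma beta_eq_hammingDist (s : Fin n → Bool) : beta s = hammingDist s (fun _ => false) := by
  simp [beta, hammingDist]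

lemma alpha_eq_hammingDist (s : Fin n → Bool) : alpha s = hammingDist s (fun _ => true) := by
  simp [alpha, hammingDist]

@[simp] lemma alpha_const_false : alpha (fun _ : Fin n => false) = n := by simp [alpha]

@[simp] lemma beta_const_false : beta (fun _ : Fin n => false) = 0 := by simp [beta]

@[simp] lemma alpha_const_true : alpha (fun _ : Fin n => true) = 0 := by simp [alpha]

@[simp] lemma beta_const_true : beta (fun _ : Fin n => true) = n := by simp [beta]

lemma alpha_add_beta (s : Fin n → Bool) : alpha s + beta s = n := by
  simpa [alpha, beta] using
    Finset.card_filter_add_card_filter_not (s := Finset.univ) (fun i => s i = false)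

variable {f : (Fin n → Bool) → ℕ}

lemma IsLoopCount.le_add_hammingDist (hf : IsLoopCount f) (s t : Fin n → Bool) :
    f s ≤ f t + hammingDist s t := by
  induction h : hammingDist s t generalizing s with
  | zero => simp [hammingDist_eq_zero.1 h]
  | succ k ih =>
    obtain ⟨i, hi⟩ := Function.ne_iff.1 (hammingDist_ne_zero.1 (by rw [h]; exact k.succ_ne_zero))
    have hk : hammingDist (update s i (t i)) t = k := by
      have := hammingDist_update_add_one hi; omega
    have hflip : update (update s i (t i)) i (!update s i (t i) i) = s := by
      rw [update_idem, update_self, update_eq_self_iff, Bool.eq_not.mpr hi]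
    have hstep := (abs_le.1 (hf.2 (update s i (t i)) i)).2
    rw [hflip] at hstep
    have := ih _ hk
    omega

lemma IsLoopCount.add_one_le_add_hammingDist (hf : IsLoopCount f) {c : Fin n → Bool}
    (hc : ∀ i, f (update c i (!c i)) ≤ f c) {s : Fin n → Bool} (hs : s ≠ c) :
    f s + 1 ≤ f c + hammingDist s c := by
  obtain ⟨i, hi⟩ := Function.ne_iff.1 hs
  have hdist := hammingDist_update_add_one hi.symm
  rw [Bool.eq_not.mpr hi, hammingDist_comm, hammingDist_comm c] at hdist
  have := hf.le_add_hammingDist s (update c i (!c i))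
  have := hc i
  omega

end States

lemma odeg_eq_of_coeff_ne_zero {g : ℤ[T;T⁻¹]} {D : ℤ} (hD : g.coeff D ≠ 0)
    (h : ∀ d, D < d → g.coeff d = 0) : odeg g = D := by
  have hmax : g.coeff.support.max = D :=
    le_antisymm
      (Finset.max_le fun d hd => WithBot.coe_le_coe.2 <|
        not_lt.1 fun hlt => Finsupp.mem_support_iff.1 hd (h d hlt))
      (Finset.le_max (Finsupp.mem_support_iff.2 hD))
  rw [odeg, hmax, WithBot.unbotD_coe]

lemma udeg_eq_of_coeff_ne_zero {g : ℤ[T;T⁻¹]} {D : ℤ} (hD : g.coeff D ≠ 0)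
    (h : ∀ d, d < D → g.coeff d = 0) : udeg g = D := by
  have hmin : g.coeff.support.min = D :=
    le_antisymm
      (Finset.min_le (Finsupp.mem_support_iff.2 hD))
      (Finset.le_min fun d hd => WithTop.coe_le_coe.2 <|
        not_lt.1 fun hlt => Finsupp.mem_support_iff.1 hd (h d hlt))
  rw [udeg, hmin, WithTop.untopD_coe]

section Sum

variable {R ι : Type*} [Semiring R] [Fintype ι]

lemma coeff_sum_eq_of_forall_maxDeg_lt (g : ι → R[T;T⁻¹]) (deg : ι → ℤ) {i₀ : ι}
    (hg : ∀ i d, deg i < d → (g i).coeff d = 0) (hdeg : ∀ i ≠ i₀, deg i < deg i₀)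
    {d : ℤ} (hd : deg i₀ ≤ d) : (∑ i, g i).coeff d = (g i₀).coeff d := by
  rw [AddMonoidAlgebra.coeff_sum, Finsupp.finsetSum_apply,
    Finset.sum_eq_single i₀ (fun i _ hi => hg i d ((hdeg i hi).trans_le hd)) (by simp)]

lemma coeff_sum_eq_of_forall_lt_minDeg (g : ι → R[T;T⁻¹]) (deg : ι → ℤ) {i₀ : ι}
    (hg : ∀ i d, d < deg i → (g i).coeff d = 0) (hdeg : ∀ i ≠ i₀, deg i₀ < deg i)
    {d : ℤ} (hd : d ≤ deg i₀) : (∑ i, g i).coeff d = (g i₀).coeff d := by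
  rw [AddMonoidAlgebra.coeff_sum, Finsupp.finsetSum_apply,
    Finset.sum_eq_single i₀ (fun i _ hi => hg i d (hd.trans_lt (hdeg i hi))) (by simp)]

end Sum

section Weight

variable {n : ℕ} (f : (Fin n → Bool) → ℕ)

def weightMaxDeg (s : Fin n → Bool) : ℤ := alpha s - beta s + 2 * (f s - 1 : ℕ)

def weightMinDeg (s : Fin n → Bool) : ℤ := alpha s - beta s - 2 * (f s - 1 : ℕ)

lemma coeff_weight (s : Fin n → Bool) (d : ℤ) :
    (weight f s).coeff d = (loopValue ℤ ^ (f s - 1)).coeff (d - (alpha s - beta s)) :=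
  coeff_T_mul _ _ _

lemma coeff_weight_eq_zero_of_maxDeg_lt {s : Fin n → Bool} {d : ℤ} (h : weightMaxDeg f s < d) :
    (weight f s).coeff d = 0 := by
  rw [coeff_weight]
  exact coeff_loopValue_pow_eq_zero_of_lt (lt_abs.2 (Or.inl (by rw [weightMaxDeg] at h; omega)))

lemma coeff_weight_eq_zero_of_lt_minDeg {s : Fin n → Bool} {d : ℤ} (h : d < weightMinDeg f s) :
    (weight f s).coeff d = 0 := by
  rw [coeff_weight]
  exact coeff_loopValue_pow_eq_zero_of_lt (lt_abs.2 (Or.inr (by rw [weightMinDeg] at h; omega)))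

lemma coeff_weight_maxDeg (s : Fin n → Bool) :
    (weight f s).coeff (weightMaxDeg f s) = (-1) ^ (f s - 1) := by
  rw [coeff_weight, weightMaxDeg, add_sub_cancel_left, coeff_loopValue_pow_two_mul]

lemma coeff_weight_minDeg (s : Fin n → Bool) :
    (weight f s).coeff (weightMinDeg f s) = (-1) ^ (f s - 1) := by
  rw [coeff_weight, weightMinDeg, sub_sub_cancel_left, coeff_loopValue_pow_neg,
    coeff_loopValue_pow_two_mul]

end Weight

section Bracket

variable {n : ℕ} {f : (Fin n → Bool) → ℕ}

lemma weightMaxDeg_lt_of_ne_const_false (hf : IsLoopCount f)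
    (hA : ∀ i, f (update (fun _ => false) i true) ≤ f (fun _ => false))
    {s : Fin n → Bool} (hs : s ≠ fun _ => false) :
    weightMaxDeg f s < weightMaxDeg f (fun _ => false) := by
  have hadequate := hf.add_one_le_add_hammingDist hA hs
  rw [← beta_eq_hammingDist] at hadequate
  have := alpha_add_beta s
  have := hf.1 s
  rw [weightMaxDeg, weightMaxDeg, alpha_const_false, beta_const_false]
  omega

lemma weightMinDeg_gt_of_ne_const_true (hf : IsLoopCount f)
    (hB : ∀ i, f (update (fun _ => true) i false) ≤ f (fun _ => true))
    {s : Fin n → Bool} (hs : s ≠ fun _ => true) :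
    weightMinDeg f (fun _ => true) < weightMinDeg f s := by
  have hadequate := hf.add_one_le_add_hammingDist hB hs
  rw [← alpha_eq_hammingDist] at hadequate
  have := alpha_add_beta s
  have := hf.1 s
  rw [weightMinDeg, weightMinDeg, alpha_const_true, beta_const_true]
  omega

lemma coeff_bracket_of_weightMaxDeg_le (hf : IsLoopCount f)
    (hA : ∀ i, f (update (fun _ => false) i true) ≤ f (fun _ => false))
    {d : ℤ} (hd : weightMaxDeg f (fun _ => false) ≤ d) :
    (bracket f).coeff d = (weight f (fun _ => false)).coeff d :=
  coeff_sum_eq_of_forall_maxDeg_lt _ _ (fun _ _ => coeff_weight_eq_zero_of_maxDeg_lt f)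
    (fun _ => weightMaxDeg_lt_of_ne_const_false hf hA) hd

lemma coeff_bracket_of_le_weightMinDeg (hf : IsLoopCount f)
    (hB : ∀ i, f (update (fun _ => true) i false) ≤ f (fun _ => true))
    {d : ℤ} (hd : d ≤ weightMinDeg f (fun _ => true)) :
    (bracket f).coeff d = (weight f (fun _ => true)).coeff d :=
  coeff_sum_eq_of_forall_lt_minDeg _ _ (fun _ _ => coeff_weight_eq_zero_of_lt_minDeg f)
    (fun _ => weightMinDeg_gt_of_ne_const_true hf hB) hd

end Bracket

/-- Equality in the refined KMT inequality for pseudo-adequate diagrams: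
the bracket is nonzero and `span ⟨f⟩ = 2n + 2(f(s_A) + f(s_B)) - 4`. -/
theorem lspan_bracket_of_pseudo_adequate {n : ℕ} (f : (Fin n → Bool) → ℕ)
    (hf : IsLoopCount f)
    (hA : ∀ i : Fin n, f (Function.update (fun _ => false) i true) ≤ f (fun _ => false))
    (hB : ∀ i : Fin n, f (Function.update (fun _ => true) i false) ≤ f (fun _ => true)) :
    bracket f ≠ 0 ∧
    lspan (bracket f) =
      2 * (n : ℤ) + 2 * ((f (fun _ => false) : ℤ) + (f (fun _ => true) : ℤ)) - 4 := by
  have hmax : (bracket f).coeff (weightMaxDeg f (fun _ => false)) ≠ 0 := by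
    rw [coeff_bracket_of_weightMaxDeg_le hf hA le_rfl, coeff_weight_maxDeg]
    exact pow_ne_zero _ (by norm_num)
  have hmin : (bracket f).coeff (weightMinDeg f (fun _ => true)) ≠ 0 := by
    rw [coeff_bracket_of_le_weightMinDeg hf hB le_rfl, coeff_weight_minDeg]
    exact pow_ne_zero _ (by norm_num)
  have hodeg := odeg_eq_of_coeff_ne_zero hmax fun d hd => by
    rw [coeff_bracket_of_weightMaxDeg_le hf hA hd.le]
    exact coeff_weight_eq_zero_of_maxDeg_lt f hd
  have hudeg := udeg_eq_of_coeff_ne_zero hmin fun d hd => by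
    rw [coeff_bracket_of_le_weightMinDeg hf hB hd.le]
    exact coeff_weight_eq_zero_of_lt_minDeg f hd
  refine ⟨fun h => hmax (by rw [h]; rfl), ?_⟩
  have := hf.1 (fun _ => false)
  have := hf.1 (fun _ => true)
  rw [lspan, hodeg, hudeg, weightMaxDeg, weightMinDeg]
  simp only [alpha_const_false, beta_const_false, alpha_const_true, beta_const_true]
  omega
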